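/- For all natural numbers n ≥ 1, ∑_{i=0}^{n} ∑_{j=0}^{n} (i^2 - j^2)^2 · binomial(2n, n-i) · binomial(2n, n-j) − binomial(2n, n) · ∑_{j=0}^{n} j^4 · binomial(2n, n-j) = 2^(4n-3) · n · (2n-1). -/

import Mathlib

/-!
Write `w j = C(2n, n - j)` and `Hₚ = ∑_{j ≤ n} jᵖ w j`. The double sum is `2 H₀ H₄ - 2 H₂²`.
Folding the row `C(2n, ·)` about its centre turns its even central moments
`∑ₖ C(2n, k) (2k - 2n)ᵖ` into `Hₚ`, and Pascal's rule gives these moments by induction on the row: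
`4ⁿ`, `2n 4ⁿ` and `2n (6n - 2) 4ⁿ` for `p = 0, 2, 4`. Since `2 H₀ - C(2n, n) = 4ⁿ`, the left-hand
side is `4ⁿ H₄ - 2 H₂²`, which these values evaluate.
-/

open Finset

theorem Finset.sum_range_two_mul_add_one_add {M : Type*} [AddCommMonoid M] (F : ℕ → M) (n : ℕ) :
    ∑ k ∈ range (2 * n + 1), F k + F n = ∑ k ∈ range (n + 1), (F (n - k) + F (n + k)) := by
  have lower : ∑ k ∈ range (n + 1), F (n - k) = ∑ k ∈ range (n + 1), F k :=
    sum_range_reflect F (n + 1)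
  rw [sum_add_distrib, lower, sum_range_succ' (fun k => F (n + k)),
    show 2 * n + 1 = n + 1 + n by ring, sum_range_add]
  simp only [add_zero, add_assoc, add_comm 1]

theorem Finset.Nat.sum_antidiagonal_two_mul_add {M : Type*} [AddCommMonoid M] (G : ℕ → ℕ → M)
    (n : ℕ) :
    ∑ ij ∈ antidiagonal (2 * n), G ij.1 ij.2 + G n n =
      ∑ k ∈ range (n + 1), (G (n - k) (n + k) + G (n + k) (n - k)) := by
  have h := sum_range_two_mul_add_one_add (fun k => G k (2 * n - k)) n
  simp only [show 2 * n - n = n by omega] at h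
  rw [Nat.sum_antidiagonal_eq_sum_range_succ G, h]
  refine sum_congr rfl fun k hk => ?_
  have hk : k ≤ n := Nat.lt_succ_iff.mp (mem_range.mp hk)
  congr 2 <;> omega

/-- `2 ^ m` times the `p`-th moment of the endpoint of an `m`-step simple random walk. -/
def binomialCentralMoment (m p : ℕ) : ℤ :=
  ∑ ij ∈ antidiagonal m, (m.choose ij.1 : ℤ) * ((ij.1 : ℤ) - ij.2) ^ p

theorem binomialCentralMoment_succ (m p : ℕ) :
    binomialCentralMoment (m + 1) p =
      ∑ ij ∈ antidiagonal m,
        (m.choose ij.1 : ℤ) * (((ij.1 : ℤ) - ij.2 - 1) ^ p + ((ij.1 : ℤ) - ij.2 + 1) ^ p) := by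
  rw [binomialCentralMoment, sum_antidiagonal_choose_succ_mul (fun i j => ((i : ℤ) - j) ^ p),
    ← sum_add_distrib]
  refine sum_congr rfl fun ij hij => ?_
  rw [Nat.choose_symm_of_eq_add (mem_antidiagonal.mp hij).symm]
  push_cast
  ring

theorem binomialCentralMoment_zero (m : ℕ) : binomialCentralMoment m 0 = 2 ^ m := by
  induction m with
  | zero => simp [binomialCentralMoment]
  | succ m ih =>
    rw [binomialCentralMoment_succ, pow_succ, ← ih, binomialCentralMoment, sum_mul]
    exact sum_congr rfl fun _ _ => by ring

theorem binomialCentralMoment_two (m : ℕ) : binomialCentralMoment m 2 = m * 2 ^ m := by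
  induction m with
  | zero => simp [binomialCentralMoment]
  | succ m ih =>
    have step : binomialCentralMoment (m + 1) 2 =
        2 * binomialCentralMoment m 2 + 2 * binomialCentralMoment m 0 := by
      rw [binomialCentralMoment_succ]
      simp only [binomialCentralMoment, mul_sum, ← sum_add_distrib]
      exact sum_congr rfl fun _ _ => by ring
    rw [step, ih, binomialCentralMoment_zero]
    push_cast
    ring

theorem binomialCentralMoment_four (m : ℕ) :
    binomialCentralMoment m 4 = m * (3 * m - 2) * 2 ^ m := by
  induction m with
  | zero => simp [binomialCentralMoment]
  | succ m ih =>
    have step : binomialCentralMoment (m + 1) 4 = 2 * binomialCentralMoment m 4 +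
        12 * binomialCentralMoment m 2 + 2 * binomialCentralMoment m 0 := by
      rw [binomialCentralMoment_succ]
      simp only [binomialCentralMoment, mul_sum, ← sum_add_distrib]
      exact sum_congr rfl fun _ _ => by ring
    rw [step, ih, binomialCentralMoment_two, binomialCentralMoment_zero]
    push_cast
    ring

theorem binomialCentralMoment_two_mul_of_even (n : ℕ) {p : ℕ} (hp : Even p) :
    binomialCentralMoment (2 * n) p + (2 * n).choose n * 0 ^ p =
      2 ^ (p + 1) * ∑ k ∈ range (n + 1), (k : ℤ) ^ p * (2 * n).choose (n - k) := by
  rw [binomialCentralMoment, ← sub_self (n : ℤ), mul_sum,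
    Nat.sum_antidiagonal_two_mul_add fun i j => ((2 * n).choose i : ℤ) * ((i : ℤ) - j) ^ p]
  refine sum_congr rfl fun k hk => ?_
  have hk : k ≤ n := Nat.lt_succ_iff.mp (mem_range.mp hk)
  rw [Nat.choose_symm_of_eq_add (show 2 * n = (n + k) + (n - k) by omega)]
  push_cast [hk]
  rw [show (n : ℤ) - k - (n + k) = -(2 * k) by ring, show (n : ℤ) + k - (n - k) = 2 * k by ring,
    hp.neg_pow, mul_pow, pow_succ]
  ring

theorem Finset.sum_sum_sub_sq_mul_mul {ι R : Type*} [CommRing R] (s : Finset ι) (a w : ι → R) :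
    ∑ i ∈ s, ∑ j ∈ s, (a i - a j) ^ 2 * w i * w j =
      2 * (∑ i ∈ s, w i) * ∑ i ∈ s, a i ^ 2 * w i - 2 * (∑ i ∈ s, a i * w i) ^ 2 := by
  calc ∑ i ∈ s, ∑ j ∈ s, (a i - a j) ^ 2 * w i * w j
      = ∑ i ∈ s, ∑ j ∈ s, (a i ^ 2 * w i * w j + w i * (a j ^ 2 * w j)
          - 2 * (a i * w i * (a j * w j))) := by
        exact sum_congr rfl fun i _ => sum_congr rfl fun j _ => by ring
    _ = (∑ i ∈ s, a i ^ 2 * w i) * ∑ j ∈ s, w j + (∑ i ∈ s, w i) * ∑ j ∈ s, a j ^ 2 * w j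
          - 2 * ((∑ i ∈ s, a i * w i) * ∑ j ∈ s, a j * w j) := by
        simp only [sum_add_distrib, sum_sub_distrib, ← mul_sum, ← sum_mul]
    _ = _ := by ring

theorem lemma4_spinor_identity (n : ℕ) (hn : 1 ≤ n) :
    (∑ i ∈ Finset.range (n + 1), ∑ j ∈ Finset.range (n + 1),
        ((i : ℤ) ^ 2 - (j : ℤ) ^ 2) ^ 2 * Nat.choose (2 * n) (n - i) *
          Nat.choose (2 * n) (n - j)) -
      (Nat.choose (2 * n) n : ℤ) *
        ∑ j ∈ Finset.range (n + 1), (j : ℤ) ^ 4 * Nat.choose (2 * n) (n - j) =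
      2 ^ (4 * n - 3) * n * (2 * n - 1) := by
  have h₀ := binomialCentralMoment_two_mul_of_even n Even.zero
  have h₂ := binomialCentralMoment_two_mul_of_even n even_two
  have h₄ := binomialCentralMoment_two_mul_of_even n (by decide : Even 4)
  rw [binomialCentralMoment_zero] at h₀
  rw [binomialCentralMoment_two] at h₂
  rw [binomialCentralMoment_four] at h₄
  simp only [pow_zero, one_mul, mul_one] at h₀
  push_cast at h₂ h₄
  rw [sum_sum_sub_sq_mul_mul]
  simp only [← pow_mul]
  set H₂ := ∑ k ∈ range (n + 1), (k : ℤ) ^ 2 * (2 * n).choose (n - k)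
  set H₄ := ∑ k ∈ range (n + 1), (k : ℤ) ^ 4 * (2 * n).choose (n - k)
  set T : ℤ := 2 ^ (2 * n)
  have hpow : (2 : ℤ) ^ (4 * n - 3) * 8 = T * T := by
    rw [← pow_add, show 2 * n + 2 * n = 4 * n - 3 + 3 by omega, pow_add]
    norm_num
  apply mul_left_cancel₀ (show (32 : ℤ) ≠ 0 by norm_num)
  linear_combination (-32 * H₄) * h₀ - T * h₄ + (8 * H₂ + 2 * n * T) * h₂
    - (8 * n ^ 2 - 4 * n) * hpow
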